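/- Let w₀ > 0 and let k : ℝ → ℝ be differentiable at every point of (0, w₀], with derivative k′ positive on (0, w₀] and antitone on (0, w₀] (i.e. k′(w) ≥ k′(τ) whenever 0 < w ≤ τ ≤ w₀). Then for every w ∈ (0, w₀]: k′(w)·∫_w^{w₀} e^{2(k(w) − k(τ))} dτ ≥ (1 − e^{2(k(w) − k(w₀))})/2. -/

import Mathlib

/-! For `g τ = -e^{l(k a - k τ)} / l` we have `g' = k' · e^{l(k a - k ·)} ≤ k'(a) · e^{l(k a - k ·)}`
on `[a, b]` once `k'` is maximal at `a`, so the fundamental theorem of calculus (in its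
inequality form) bounds `g b - g a = (1 - e^{l(k a - k b)}) / l` by `k'(a) ∫_a^b e^{l(k a - k τ)} dτ`. -/

open Real Set

theorem div_le_deriv_mul_integral_exp {a b l : ℝ} {k k' : ℝ → ℝ} (hab : a ≤ b) (hl : 0 < l)
    (hk : ContinuousOn k (Icc a b)) (hderiv : ∀ x ∈ Ioo a b, HasDerivAt k (k' x) x)
    (hmax : ∀ x ∈ Ioo a b, k' x ≤ k' a) :
    (1 - exp (l * (k a - k b))) / l ≤ k' a * ∫ τ in a..b, exp (l * (k a - k τ)) := by
  set f : ℝ → ℝ := fun τ => exp (l * (k a - k τ))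
  set g : ℝ → ℝ := fun τ => -f τ / l
  have hf : ContinuousOn f (Icc a b) := by
    unfold f
    fun_prop
  have hg : ∀ x ∈ Ioo a b, HasDerivAt g (k' x * f x) x := by
    intro x hx
    refine ((((hderiv x hx).const_sub (k a)).const_mul l).exp.neg.div_const l).congr_deriv ?_
    simp only [f]
    field_simp
  calc (1 - exp (l * (k a - k b))) / l = g b - g a := by
        simp only [g, f, sub_self, mul_zero, exp_zero]
        ring
    _ ≤ ∫ τ in a..b, k' a * f τ :=
        intervalIntegral.sub_le_integral_of_hasDeriv_right_of_le hab
          (hf.neg.div_const l) (fun x hx => (hg x hx).hasDerivWithinAt)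
          ((hf.const_smul (k' a)).integrableOn_Icc)
          (fun x hx => mul_le_mul_of_nonneg_right (hmax x hx) (exp_pos _).le)
    _ = k' a * ∫ τ in a..b, f τ := intervalIntegral.integral_const_mul _ _

theorem stmt_17_general (w₀ : ℝ) (k k' : ℝ → ℝ)
    (hderiv : ∀ w ∈ Set.Ioc (0 : ℝ) w₀, HasDerivAt k (k' w) w)
    (hanti : ∀ w τ : ℝ, 0 < w → w ≤ τ → τ ≤ w₀ → k' τ ≤ k' w) :
    ∀ w ∈ Set.Ioc (0 : ℝ) w₀,
      (1 - Real.exp (2 * (k w - k w₀))) / 2 ≤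
        k' w * ∫ τ in w..w₀, Real.exp (2 * (k w - k τ)) := by
  rintro w ⟨hw, hww₀⟩
  have hIcc : Icc w w₀ ⊆ Ioc 0 w₀ := fun τ hτ => ⟨hw.trans_le hτ.1, hτ.2⟩
  exact div_le_deriv_mul_integral_exp hww₀ two_pos
    (fun τ hτ => (hderiv τ (hIcc hτ)).continuousAt.continuousWithinAt)
    (fun τ hτ => hderiv τ (hIcc (Ioo_subset_Icc_self hτ)))
    (fun τ hτ => hanti w τ hw hτ.1.le hτ.2.le)

theorem stmt_17 (w₀ : ℝ) (hw₀ : 0 < w₀) (k k' : ℝ → ℝ)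
    (hderiv : ∀ w ∈ Set.Ioc (0 : ℝ) w₀, HasDerivAt k (k' w) w)
    (hpos : ∀ w ∈ Set.Ioc (0 : ℝ) w₀, 0 < k' w)
    (hanti : ∀ w τ : ℝ, 0 < w → w ≤ τ → τ ≤ w₀ → k' τ ≤ k' w) :
    ∀ w ∈ Set.Ioc (0 : ℝ) w₀,
      (1 - Real.exp (2 * (k w - k w₀))) / 2 ≤
        k' w * ∫ τ in w..w₀, Real.exp (2 * (k w - k τ)) :=
  stmt_17_general w₀ k k' hderiv hanti
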